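/- For every positive integer b and every real s > 0, g(b,s) ≥ g(1,1) = 1 - 1/e, where g(b,s) := max{s,1} · E[min{Pois(b/s), b}] / b. -/

import Mathlib

open Real

noncomputable def poissonPMF (μ : ℝ) (k : ℕ) : ℝ :=
  Real.exp (-μ) * μ ^ k / (Nat.factorial k)

noncomputable def expMinPois (μ : ℝ) (c : ℝ) : ℝ :=
  ∑' k : ℕ, poissonPMF μ k * min (k : ℝ) c

/-- `g(b,s) = max{s,1} · E[min{Pois(b/s), b}] / b`. -/
noncomputable def gFun (b : ℕ) (s : ℝ) : ℝ :=
  max s 1 * expMinPois ((b : ℝ) / s) (b : ℝ) / (b : ℝ)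

/-!
Since `min k c ≥ c (1 - (1 - 1/c)^k)` for `c ≥ 1` (Bernoulli's inequality), and the probability
generating function of `Pois(μ)` is `E[q^K] = exp (μ (q - 1))`, we get
`E[min{Pois(μ), c}] ≥ c (1 - exp (-μ/c))`, an equality for `c = 1`. With `μ = b/s, c = b` this gives
`g(b,s) ≥ max{s,1} (1 - exp (-1/s))`, which is at least `1 - 1/e`: trivially for `s ≤ 1`, and by
concavity of `x ↦ 1 - exp (-x)` on `[0,1]` for `s > 1`.
-/

lemma poissonPMF_nonneg {μ : ℝ} (hμ : 0 ≤ μ) (k : ℕ) : 0 ≤ poissonPMF μ k := by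
  unfold poissonPMF
  positivity

lemma hasSum_poissonPMF_mul_pow (μ q : ℝ) :
    HasSum (fun k => poissonPMF μ k * q ^ k) (exp (μ * (q - 1))) := by
  have hexp := (NormedSpace.expSeries_div_hasSum_exp (μ * q)).mul_left (exp (-μ))
  rw [← exp_eq_exp_ℝ, ← exp_add, show -μ + μ * q = μ * (q - 1) by ring] at hexp
  refine hexp.congr_fun fun k => ?_
  rw [poissonPMF, mul_pow]
  ring

lemma hasSum_poissonPMF (μ : ℝ) : HasSum (poissonPMF μ) 1 := by
  simpa using hasSum_poissonPMF_mul_pow μ 1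

lemma summable_poissonPMF_mul_min {μ c : ℝ} (hμ : 0 ≤ μ) (hc : 0 ≤ c) :
    Summable (fun k : ℕ => poissonPMF μ k * min (k : ℝ) c) :=
  Summable.of_nonneg_of_le
    (fun k => mul_nonneg (poissonPMF_nonneg hμ k) (le_min k.cast_nonneg hc))
    (fun k => mul_le_mul_of_nonneg_left (min_le_right _ _) (poissonPMF_nonneg hμ k))
    ((hasSum_poissonPMF μ).summable.mul_right c)

lemma mul_one_sub_one_sub_inv_pow_le_min {c : ℝ} (hc : 1 ≤ c) (k : ℕ) :
    c * (1 - (1 - c⁻¹) ^ k) ≤ min (k : ℝ) c := by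
  have hc0 : 0 < c := by linarith
  have hinv : c⁻¹ ≤ 1 := inv_le_one_of_one_le₀ hc
  refine le_min ?_ ?_
  · have bernoulli := one_add_mul_le_pow (a := -c⁻¹) (by linarith) k
    calc c * (1 - (1 - c⁻¹) ^ k) ≤ c * (k * c⁻¹) := by
          gcongr
          rw [← sub_eq_add_neg] at bernoulli
          linarith
      _ = k := by field_simp
  · have : 0 ≤ (1 - c⁻¹) ^ k := pow_nonneg (by linarith) k
    nlinarith

lemma mul_one_sub_exp_neg_div_le_expMinPois {μ c : ℝ} (hμ : 0 ≤ μ) (hc : 1 ≤ c) :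
    c * (1 - exp (-μ / c)) ≤ expMinPois μ c := by
  have hlower : HasSum (fun k => c * (poissonPMF μ k - poissonPMF μ k * (1 - c⁻¹) ^ k))
      (c * (1 - exp (-μ / c))) := by
    have h := ((hasSum_poissonPMF μ).sub (hasSum_poissonPMF_mul_pow μ (1 - c⁻¹))).mul_left c
    rwa [show μ * (1 - c⁻¹ - 1) = -μ / c by ring] at h
  refine hasSum_le (fun k => ?_) hlower
    (summable_poissonPMF_mul_min hμ (by linarith)).hasSum
  calc c * (poissonPMF μ k - poissonPMF μ k * (1 - c⁻¹) ^ k)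
      = poissonPMF μ k * (c * (1 - (1 - c⁻¹) ^ k)) := by ring
    _ ≤ poissonPMF μ k * min (k : ℝ) c :=
        mul_le_mul_of_nonneg_left (mul_one_sub_one_sub_inv_pow_le_min hc k)
          (poissonPMF_nonneg hμ k)

lemma expMinPois_one (μ : ℝ) : expMinPois μ 1 = 1 - exp (-μ) := by
  have hmin : ∀ k : ℕ, min (k : ℝ) 1 = 1 - 0 ^ k := by
    rintro (_ | k)
    · simp
    · simp [zero_pow k.succ_ne_zero]
  have hsum := (hasSum_poissonPMF μ).sub (hasSum_poissonPMF_mul_pow μ 0)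
  rw [zero_sub, mul_neg_one] at hsum
  refine HasSum.tsum_eq (hsum.congr_fun fun k => ?_)
  rw [hmin]
  ring

lemma mul_one_sub_exp_neg_one_le {x : ℝ} (hx0 : 0 ≤ x) (hx1 : x ≤ 1) :
    x * (1 - exp (-1)) ≤ 1 - exp (-x) := by
  have := convexOn_exp.2 (Set.mem_univ 0) (Set.mem_univ (-1)) (by linarith : 0 ≤ 1 - x) hx0
    (by ring)
  simp only [smul_eq_mul, mul_zero, zero_add, mul_neg_one, exp_zero] at this
  linarith

lemma one_sub_exp_neg_one_le_max_mul {s : ℝ} (hs : 0 < s) :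
    1 - exp (-1) ≤ max s 1 * (1 - exp (-s⁻¹)) := by
  rcases le_or_gt s 1 with hs1 | hs1
  · rw [max_eq_right hs1]
    have : exp (-s⁻¹) ≤ exp (-1) := exp_le_exp.2 (neg_le_neg (one_le_inv₀ hs |>.2 hs1))
    linarith
  · rw [max_eq_left hs1.le]
    calc 1 - exp (-1) = s * (s⁻¹ * (1 - exp (-1))) := by field_simp
      _ ≤ s * (1 - exp (-s⁻¹)) := by
          gcongr
          exact mul_one_sub_exp_neg_one_le (by positivity) (inv_le_one_of_one_le₀ hs1.le)

lemma max_mul_one_sub_exp_neg_inv_le_gFun {b : ℕ} (hb : 1 ≤ b) {s : ℝ} (hs : 0 < s) :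
    max s 1 * (1 - exp (-s⁻¹)) ≤ gFun b s := by
  have hb0 : (0 : ℝ) < b := by exact_mod_cast hb
  have key := mul_one_sub_exp_neg_div_le_expMinPois (div_pos hb0 hs).le (c := b)
    (by exact_mod_cast hb)
  rw [show -((b : ℝ) / s) / b = -s⁻¹ by field_simp] at key
  rw [gFun, le_div_iff₀ hb0]
  calc max s 1 * (1 - exp (-s⁻¹)) * b = max s 1 * (b * (1 - exp (-s⁻¹))) := by ring
    _ ≤ max s 1 * expMinPois (b / s) b := by gcongr

theorem stmt_1 (b : ℕ) (hb : 1 ≤ b) (s : ℝ) (hs : 0 < s) :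
    gFun 1 1 = 1 - 1 / Real.exp 1 ∧ gFun b s ≥ gFun 1 1 := by
  have g11 : gFun 1 1 = 1 - exp (-1) := by simp [gFun, expMinPois_one]
  refine ⟨by rw [g11, exp_neg, one_div], ?_⟩
  rw [g11]
  exact (one_sub_exp_neg_one_le_max_mul hs).trans (max_mul_one_sub_exp_neg_inv_le_gFun hb hs)
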